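/- Let S be a numerical semigroup minimally generated by n_1 < ... < n_b. Suppose x ∈ T with tord(x) = 1 and x + n_1 = ∑_{i=2}^b s_i n_i is a maximal expression; let l_x = ord(x+n_1) − ord(x) − 1 and k = ord(x) + 1. If y = ∑_{i=2}^b (s_i − r_i) n_i with 0 ≤ r_i ≤ s_i and ∑ r_i = l_x, then ord(y) = k and y − n_1 ∉ (k−1)M, where M = S\{0} and (k−1)M is the (k−1)-fold sumset. -/
import Mathlib


open Finset

/-- Membership in the numerical semigroup generated by `n`. -/
def memS {b : ℕ} (n : Fin b → ℕ) (s : ℕ) : Prop :=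
  ∃ r : Fin b → ℕ, ∑ i, r i * n i = s

/-- The order of `s`: the largest number of generators (with repetition) summing to `s`. -/
noncomputable def ord {b : ℕ} (n : Fin b → ℕ) (s : ℕ) : ℕ :=
  sSup {k | ∃ r : Fin b → ℕ, (∑ i, r i * n i = s) ∧ ∑ i, r i = k}

/-- `r` is a maximal expression of `s`. -/
def IsMaxExpr {b : ℕ} (n : Fin b → ℕ) (s : ℕ) (r : Fin b → ℕ) : Prop :=
  (∑ i, r i * n i = s) ∧ ∑ i, r i = ord n s

/-- `s` is a torsion element: `ord (s + c·n₁) > ord s + c` for some `c > 0`. -/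
def Torsion {b : ℕ} [NeZero b] (n : Fin b → ℕ) (s : ℕ) : Prop :=
  ∃ c, 0 < c ∧ ord n s + c < ord n (s + c * n 0)

/-- The torsion order: least `c > 0` with `ord (s + c·n₁) > ord s + c`. -/
noncomputable def tord {b : ℕ} [NeZero b] (n : Fin b → ℕ) (s : ℕ) : ℕ :=
  sInf {c | 0 < c ∧ ord n s + c < ord n (s + c * n 0)}

/-- `n` is a minimal system of generators of a numerical semigroup,
listed increasingly. -/
def MinGen {b : ℕ} (n : Fin b → ℕ) : Prop :=
  StrictMono n ∧ (∀ i, 1 < n i) ∧ Finset.univ.gcd n = 1 ∧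
  ∀ i, ¬ ∃ r : Fin b → ℕ, r i = 0 ∧ ∑ j, r j * n j = n i

/-- The Apéry set of the semigroup generated by `n` with respect to `ν`. -/
def Ap {b : ℕ} (n : Fin b → ℕ) (ν : ℕ) : Set ℕ :=
  {s | memS n s ∧ ¬ ∃ t, memS n t ∧ t + ν = s}

/-- The `k`-fold sumset `kM` of the maximal ideal `M = S \ {0}`:
the elements of order at least `k`. -/
def powM {b : ℕ} (n : Fin b → ℕ) (k : ℕ) : Set ℕ :=
  {s | ∃ r : Fin b → ℕ, k ≤ ∑ i, r i ∧ ∑ i, r i * n i = s}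

/-- The reduction number: least `r` with `(r+1)M = n₁ + rM`. -/
noncomputable def redNum {b : ℕ} [NeZero b] (n : Fin b → ℕ) : ℕ :=
  sInf {r | powM n (r + 1) = (fun t => n 0 + t) '' powM n r}


lemma ord_bddAbove' {b : ℕ} (n : Fin b → ℕ) (hn : ∀ i, 1 ≤ n i) (s : ℕ) :
    BddAbove {k | ∃ r : Fin b → ℕ, (∑ i, r i * n i = s) ∧ ∑ i, r i = k} := by
  refine ⟨s, fun k hk => ?_⟩
  obtain ⟨q, hq, rfl⟩ := hk
  calc ∑ i, q i ≤ ∑ i, q i * n i :=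
        Finset.sum_le_sum (fun i _ => Nat.le_mul_of_pos_right _ (hn i))
    _ = s := hq

lemma le_ord' {b : ℕ} (n : Fin b → ℕ) (hn : ∀ i, 1 ≤ n i) (s : ℕ)
    (q : Fin b → ℕ) (hq : ∑ i, q i * n i = s) : ∑ i, q i ≤ ord n s :=
  le_csSup (ord_bddAbove' n hn s) ⟨q, hq, rfl⟩

theorem stmt17 {b : ℕ} [NeZero b] (hb : 2 ≤ b) (n : Fin b → ℕ) (hmin : MinGen n)
    (x : ℕ) (hx : Torsion n x) (ht : tord n x = 1)
    (sc : Fin b → ℕ) (hsc0 : sc 0 = 0) (hsc : IsMaxExpr n (x + n 0) sc)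
    (r : Fin b → ℕ) (hr0 : r 0 = 0) (hrle : ∀ i, r i ≤ sc i)
    (hrsum : ∑ i, r i = ord n (x + n 0) - ord n x - 1) :
    ord n (∑ i, (sc i - r i) * n i) = ord n x + 1 ∧
    ¬ ∃ t, t + n 0 = ∑ i, (sc i - r i) * n i ∧ t ∈ powM n (ord n x) := by
  have hn1 : ∀ i, 1 ≤ n i := fun i => le_of_lt (hmin.2.1 i)
  -- torsion with c = 1
  have h1 : 0 < 1 ∧ ord n x + 1 < ord n (x + 1 * n 0) := by
    have := Nat.sInf_mem (s := {c | 0 < c ∧ ord n x + c < ord n (x + c * n 0)}) hx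
    rwa [show sInf {c | 0 < c ∧ ord n x + c < ord n (x + c * n 0)} = tord n x from rfl,
      ht] at this
  have ho : ord n x + 1 < ord n (x + n 0) := by
    have := h1.2; rwa [one_mul] at this
  have hsc_sum : ∑ i, sc i * n i = x + n 0 := hsc.1
  have hsc_ord : ∑ i, sc i = ord n (x + n 0) := hsc.2
  -- the combined expression
  have hy : (∑ i, (sc i - r i) * n i) + ∑ i, r i * n i = x + n 0 := by
    rw [← Finset.sum_add_distrib, ← hsc_sum]
    refine Finset.sum_congr rfl fun i _ => ?_
    rw [← add_mul, Nat.sub_add_cancel (hrle i)]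
  have hysum : (∑ i, (sc i - r i)) + ∑ i, r i = ord n (x + n 0) := by
    rw [← Finset.sum_add_distrib, ← hsc_ord]
    exact Finset.sum_congr rfl fun i _ => Nat.sub_add_cancel (hrle i)
  set y := ∑ i, (sc i - r i) * n i with hydef
  have hk : (∑ i, (sc i - r i)) = ord n x + 1 := by omega
  have hlow : ord n x + 1 ≤ ord n y := by
    rw [← hk]; exact le_ord' n hn1 y _ rfl
  constructor
  · refine le_antisymm ?_ hlow
    refine csSup_le ⟨ord n x + 1, (fun i => sc i - r i), rfl, hk⟩ ?_
    rintro m ⟨q, hq, rfl⟩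
    have hcomb : ∑ i, (q i + r i) * n i = x + n 0 := by
      simp only [add_mul, Finset.sum_add_distrib, hq]; exact hy
    have := le_ord' n hn1 (x + n 0) _ hcomb
    rw [Finset.sum_add_distrib] at this
    omega
  · rintro ⟨t, htn, q, hqsum, hq⟩
    have hxt : ∑ i, (q i + r i) * n i = x := by
      have : t + ∑ i, r i * n i = x := by omega
      simp only [add_mul, Finset.sum_add_distrib, hq]; exact this
    have := le_ord' n hn1 x _ hxt
    rw [Finset.sum_add_distrib] at this
    omega
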